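/- For all n ≥ 0 and integers r, s ≥ 1, the Bernoulli polynomial of order s satisfies B_n^{(s)}(x) = (1/2^r)·Σ_{k=0}^{n} C(n,k)·(Σ_{l=0}^{r} C(r,l)·B_{n-k}^{(s)}(l))·E_k^{(r)}(x). -/

import Mathlib

open Polynomial Finset

/-- Euler polynomials `E_n(x)`, defined over `ℚ` by the recurrence
`E_n(x) = x^n - (1/2) ∑_{k<n} C(n,k) E_k(x)`, equivalent to the
generating function `(2/(e^t+1)) e^{xt} = ∑ E_n(x) t^n/n!`. -/
noncomputable def eulerPoly : ℕ → ℚ[X]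
  | n => X ^ n - Polynomial.C (1/2 : ℚ) *
      ∑ k : Fin n, Polynomial.C (n.choose k : ℚ) * eulerPoly k

/-- Euler polynomials of order `r`, `E_n^{(r)}(x)`, with generating function
`(2/(e^t+1))^r e^{xt}`; defined by Cauchy-product recursion on `r`, using the
Euler numbers `E_k = E_k(0)`. -/
noncomputable def eulerPolyOrder : ℕ → ℕ → ℚ[X]
  | 0, n => X ^ n
  | r+1, n => ∑ k ∈ Finset.range (n+1),
      Polynomial.C ((n.choose k : ℚ) * (eulerPoly k).eval 0) * eulerPolyOrder r (n-k)

/-- Bernoulli polynomials of order `s`, with generating function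
`(t/(e^t-1))^s e^{xt}`; defined by Cauchy-product recursion on `s`, using the
Bernoulli numbers `B_k = B_k(0)` (Mathlib's `bernoulli`). -/
noncomputable def bernoulliPolyOrder : ℕ → ℕ → ℚ[X]
  | 0, n => X ^ n
  | s+1, n => ∑ k ∈ Finset.range (n+1),
      Polynomial.C ((n.choose k : ℚ) * _root_.bernoulli k) * bernoulliPolyOrder s (n-k)

/-!
Pass to exponential generating functions in `t`. The families `E_n^{(r)}(x)` and `B_n^{(s)}(x)`
have generating functions `ε(t)^r e^{xt}` and `β(t)^s e^{xt}`, where `ε(t) (e^t + 1) = 2` by the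
recurrence for the Euler numbers. Since `e^{lt} = (e^t)^l`, the inner sums
`∑_l C(r,l) B_m^{(s)}(l)` have generating function `β(t)^s (e^t + 1)^r`, and multiplying this by
`ε(t)^r e^{xt}` gives `2^r β(t)^s e^{xt}`. Nothing about `β` is used beyond this shape, so the
identity holds for every family whose generating function is `g(t) e^{xt}`.
-/

open scoped Nat

namespace PowerSeries

variable {A : Type*} [CommRing A] [Algebra ℚ A]

noncomputable def egf : (ℕ → A) →ₗ[ℚ] A⟦X⟧ where
  toFun f := mk fun n => (n ! : ℚ)⁻¹ • f n
  map_add' f g := by ext; simp [smul_add]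
  map_smul' c f := by ext; simp [smul_comm c]

theorem coeff_egf (f : ℕ → A) (n : ℕ) : coeff n (egf f) = (n ! : ℚ)⁻¹ • f n := by
  simp [egf]

theorem egf_injective : Function.Injective (egf : (ℕ → A) → A⟦X⟧) := by
  intro f g h
  funext n
  have := congrArg (coeff n) h
  rwa [coeff_egf, coeff_egf, smul_right_inj (inv_ne_zero (by positivity))] at this

theorem egf_mul (f g : ℕ → A) :
    egf f * egf g = egf fun n => ∑ k ∈ range (n + 1), (n.choose k : ℚ) • (f k * g (n - k)) := by
  ext n
  rw [coeff_mul,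
    Finset.Nat.sum_antidiagonal_eq_sum_range_succ fun i j => coeff i (egf f) * coeff j (egf g),
    coeff_egf, smul_sum]
  refine sum_congr rfl fun k hk => ?_
  have hkn : k ≤ n := Nat.lt_succ_iff.mp (mem_range.mp hk)
  rw [coeff_egf, coeff_egf, smul_mul_smul_comm, smul_smul]
  congr 1
  rw [Nat.cast_choose ℚ hkn]
  field_simp

theorem egf_pow (a : A) : egf (fun n => a ^ n) = rescale a (exp A) := by
  ext n
  rw [coeff_egf, coeff_rescale, coeff_exp, Algebra.smul_def, one_div, mul_comm]

theorem egf_zero_pow : egf (fun n => (0 : A) ^ n) = 1 := by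
  rw [egf_pow, rescale_zero_apply, constantCoeff_exp, map_one]

theorem map_egf {B : Type*} [CommRing B] [Algebra ℚ B] (ψ : A →+* B) (f : ℕ → A) :
    map ψ (egf f) = egf (ψ ∘ f) := by
  ext n
  simp only [coeff_map, coeff_egf, Function.comp_apply, map_rat_smul]

end PowerSeries

open PowerSeries (egf egf_mul egf_pow map_egf rescale exp)

theorem egf_eq_pow_mul_of_binomial_recursion {c : ℕ → ℚ} {p : ℕ → ℕ → ℚ[X]}
    (h0 : ∀ n, p 0 n = X ^ n)
    (hsucc : ∀ r n, p (r + 1) n = ∑ k ∈ range (n + 1), C ((n.choose k : ℚ) * c k) * p r (n - k))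
    (r : ℕ) :
    egf (p r) = PowerSeries.map C (egf c ^ r) * rescale X (exp ℚ[X]) := by
  induction r with
  | zero => rw [pow_zero, map_one, one_mul, ← egf_pow]; exact congrArg egf (funext h0)
  | succ r ih =>
    rw [map_pow, _root_.pow_succ', mul_assoc, ← map_pow, ← ih, map_egf, egf_mul]
    refine congrArg egf (funext fun n => ?_)
    rw [hsucc]
    refine sum_congr rfl fun k _ => ?_
    rw [C_mul, smul_eq_C_mul, Function.comp_apply, mul_assoc]

theorem egf_eval_of_egf_eq {p : ℕ → ℚ[X]} {g : PowerSeries ℚ}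
    (hp : egf p = PowerSeries.map C g * rescale X (exp ℚ[X])) (x : ℚ) :
    egf (fun n => (p n).eval x) = g * rescale x (exp ℚ) := by
  have hg : PowerSeries.map (evalRingHom x) (PowerSeries.map C g) = g := by
    ext n; simp [PowerSeries.coeff_map]
  have := congrArg (PowerSeries.map (evalRingHom x)) hp
  rw [map_egf, map_mul, hg, ← egf_pow, map_egf] at this
  simpa only [Function.comp_def, coe_evalRingHom, eval_pow, eval_X, egf_pow] using this

theorem egf_eulerPolyOrder (r : ℕ) :
    egf (eulerPolyOrder r) =
      PowerSeries.map C ((egf fun k => (eulerPoly k).eval 0) ^ r) * rescale X (exp ℚ[X]) :=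
  egf_eq_pow_mul_of_binomial_recursion (fun _ => rfl) (fun _ _ => rfl) r

theorem egf_bernoulliPolyOrder (s : ℕ) :
    egf (bernoulliPolyOrder s) =
      PowerSeries.map C (egf _root_.bernoulli ^ s) * rescale X (exp ℚ[X]) :=
  egf_eq_pow_mul_of_binomial_recursion (fun _ => rfl) (fun _ _ => rfl) s

theorem eulerPoly_eval_zero (n : ℕ) :
    (eulerPoly n).eval 0 =
      0 ^ n - 1 / 2 * ∑ k ∈ range n, (n.choose k : ℚ) * (eulerPoly k).eval 0 := by
  rw [eulerPoly]
  simp [eval_finsetSum, Fin.sum_univ_eq_sum_range fun k => (n.choose k : ℚ) * (eulerPoly k).eval 0]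

theorem egf_eulerPoly_eval_zero_mul_exp_add_one :
    egf (fun n => (eulerPoly n).eval 0) * (exp ℚ + 1) = 2 := by
  have hexp : exp ℚ = egf fun _ => 1 := by ext n; simp [PowerSeries.coeff_egf]
  have htwo : (2 : PowerSeries ℚ) = egf fun n => 2 * 0 ^ n := by
    rw [show (fun n : ℕ => (2 : ℚ) * 0 ^ n) = (2 : ℚ) • fun n => 0 ^ n from rfl, map_smul,
      PowerSeries.egf_zero_pow, two_smul, one_add_one_eq_two]
  rw [mul_add, mul_one, hexp, egf_mul, ← map_add, htwo]
  refine congrArg egf (funext fun n => ?_)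
  rw [Pi.add_apply, sum_range_succ, eulerPoly_eval_zero n]
  simp only [smul_eq_mul, mul_one, Nat.choose_self, Nat.cast_one, one_mul]
  ring

theorem egf_sum_choose_mul_eval_of_egf_eq {p : ℕ → ℚ[X]} {g : PowerSeries ℚ}
    (hp : egf p = PowerSeries.map C g * rescale X (exp ℚ[X])) (r : ℕ) :
    egf (fun m => ∑ l ∈ range (r + 1), (r.choose l : ℚ) * (p m).eval (l : ℚ)) =
      g * (exp ℚ + 1) ^ r := by
  have hsum : (fun m => ∑ l ∈ range (r + 1), (r.choose l : ℚ) * (p m).eval (l : ℚ)) =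
      ∑ l ∈ range (r + 1), (r.choose l : ℚ) • fun m => (p m).eval (l : ℚ) := by
    ext m; simp [Finset.sum_apply]
  rw [hsum, map_sum, add_pow, mul_sum]
  refine sum_congr rfl fun l _ => ?_
  rw [map_smul, egf_eval_of_egf_eq hp, ← PowerSeries.exp_pow_eq_rescale_exp, one_pow, mul_one,
    Nat.cast_smul_eq_nsmul, nsmul_eq_mul]
  ring

theorem egf_eulerPolyOrder_mul_sum_choose_mul_eval {p : ℕ → ℚ[X]} {g : PowerSeries ℚ}
    (hp : egf p = PowerSeries.map C g * rescale X (exp ℚ[X])) (r : ℕ) :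
    egf (eulerPolyOrder r) * PowerSeries.map C
        (egf fun m => ∑ l ∈ range (r + 1), (r.choose l : ℚ) * (p m).eval (l : ℚ)) =
      (2 : ℚ) ^ r • egf p := by
  rw [egf_sum_choose_mul_eval_of_egf_eq hp, egf_eulerPolyOrder, hp, Algebra.smul_def]
  calc _ = PowerSeries.map C (((egf fun k => (eulerPoly k).eval 0) * (exp ℚ + 1)) ^ r) *
        (PowerSeries.map C g * rescale X (exp ℚ[X])) := by
        simp only [mul_pow, map_mul]; ring
    _ = _ := by simp only [egf_eulerPoly_eval_zero_mul_exp_add_one, map_pow, map_ofNat]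

theorem eq_sum_eulerPolyOrder_of_egf_eq {p : ℕ → ℚ[X]} {g : PowerSeries ℚ}
    (hp : egf p = PowerSeries.map C g * rescale X (exp ℚ[X])) (r n : ℕ) :
    p n = C ((1 : ℚ) / 2 ^ r) *
      ∑ k ∈ range (n + 1),
        C ((n.choose k : ℚ) * ∑ l ∈ range (r + 1), (r.choose l : ℚ) * (p (n - k)).eval (l : ℚ)) *
          eulerPolyOrder r k := by
  set e := fun m => ∑ l ∈ range (r + 1), (r.choose l : ℚ) * (p m).eval (l : ℚ)
  suffices h : p = fun n => C ((1 : ℚ) / 2 ^ r) * ∑ k ∈ range (n + 1),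
      C ((n.choose k : ℚ) * e (n - k)) * eulerPolyOrder r k from congrFun h n
  have hrhs : (fun n => C ((1 : ℚ) / 2 ^ r) * ∑ k ∈ range (n + 1),
      C ((n.choose k : ℚ) * e (n - k)) * eulerPolyOrder r k) =
      ((1 : ℚ) / 2 ^ r) • fun n => ∑ k ∈ range (n + 1),
        (n.choose k : ℚ) • (eulerPolyOrder r k * (C ∘ e) (n - k)) := by
    ext1 n
    rw [Pi.smul_apply, smul_eq_C_mul]
    congr 1
    refine sum_congr rfl fun k _ => ?_
    rw [smul_eq_C_mul, C_mul, Function.comp_apply]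
    ring
  apply PowerSeries.egf_injective
  rw [hrhs, map_smul, ← egf_mul, ← map_egf, egf_eulerPolyOrder_mul_sum_choose_mul_eval hp,
    smul_smul, one_div_mul_cancel (by positivity), one_smul]

theorem bernoulli_poly_order_in_euler_order_basis_general (n r s : ℕ) :
    bernoulliPolyOrder s n =
      Polynomial.C ((1 : ℚ) / 2 ^ r) *
        ∑ k ∈ Finset.range (n + 1),
          Polynomial.C ((n.choose k : ℚ) *
              ∑ l ∈ Finset.range (r + 1),
                (r.choose l : ℚ) * (bernoulliPolyOrder s (n - k)).eval (l : ℚ)) *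
            eulerPolyOrder r k :=
  eq_sum_eulerPolyOrder_of_egf_eq (p := bernoulliPolyOrder s) (egf_bernoulliPolyOrder s) r n

theorem bernoulli_poly_order_in_euler_order_basis (n r s : ℕ) (hr : 1 ≤ r) (hs : 1 ≤ s) :
    bernoulliPolyOrder s n =
      Polynomial.C ((1 : ℚ) / 2 ^ r) *
        ∑ k ∈ Finset.range (n + 1),
          Polynomial.C ((n.choose k : ℚ) *
              ∑ l ∈ Finset.range (r + 1),
                (r.choose l : ℚ) * (bernoulliPolyOrder s (n - k)).eval (l : ℚ)) *
            eulerPolyOrder r k :=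
  bernoulli_poly_order_in_euler_order_basis_general n r s
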